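/- For every integer n ≥ 2, every non-negative integer m, and every integer t with 1 ≤ t ≤ n-1, it holds that 2·G(n-t, t, m) ≤ G(n-t-1, t+1, m) + G(n-t+1, t-1, m); that is, the discrete function t ↦ G(n-t, t, m) is convex on {0, 1, ..., n}. -/
import Mathlib


open MeasureTheory Filter

/-- `Ib n m = Σ_{z=0}^{n} ((1 + (-1)^{n-z}) / 2^m) · m!/(z!(m-z)!)`, empty sum for `n < 0`. -/
noncomputable def Ib (n : ℤ) (m : ℕ) : ℝ :=
  ∑ z ∈ Finset.range (n + 1).toNat,
    ((1 + (-1 : ℝ) ^ (n.toNat - z)) / 2 ^ m) * (m.choose z)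

/-- The function `G(x, y, m)` of the paper. -/
noncomputable def Gfun (x y m : ℕ) : ℝ :=
  if x = 0 ∧ y = 0 then 1 else
    ∑ n ∈ Finset.range (m / (2 * (x + y)) + 1),
      (2 * Ib (((m : ℤ) - x) / 2 - ((x : ℤ) + y) * n) (2 * (((m : ℤ) - x) / 2) + x + 2).toNat
       - 2 * Ib (((m : ℤ) - x) / 2 - y - ((x : ℤ) + y) * n) (2 * (((m : ℤ) - x) / 2) + x + 2).toNat
       + 2 * Ib (((m : ℤ) - y) / 2 - ((x : ℤ) + y) * n) (2 * (((m : ℤ) - y) / 2) + y + 2).toNat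
       - 2 * Ib (((m : ℤ) - y) / 2 - x - ((x : ℤ) + y) * n) (2 * (((m : ℤ) - y) / 2) + y + 2).toNat)

/-- The piecewise-linear interpolation `H_{n,m}(t)` of the paper. -/
noncomputable def Hfun (n m : ℕ) (t : ℝ) : ℝ :=
  if (n : ℝ) ≤ |t| then 1 else
    (1 - ((n : ℝ) + t) / 2 + (⌊((n : ℝ) + t) / 2⌋ : ℤ))
        * Gfun (⌊((n : ℝ) + t) / 2⌋).toNat (n - (⌊((n : ℝ) + t) / 2⌋).toNat) m
    + (((n : ℝ) + t) / 2 - (⌊((n : ℝ) + t) / 2⌋ : ℤ))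
        * Gfun ((⌊((n : ℝ) + t) / 2⌋).toNat + 1) (n - (⌊((n : ℝ) + t) / 2⌋).toNat - 1) m


private def tt (M : ℕ) : ℕ → ℕ
  | 0 => 1
  | 1 => M.choose 1
  | k+2 => tt M k + M.choose (k+2)

private lemma tt_sum (M k : ℕ) :
    tt M k = ∑ z ∈ Finset.range (k+1), if (k - z) % 2 = 0 then M.choose z else 0 := by
  induction k using Nat.strong_induction_on with
  | _ k ih =>
    match k with
    | 0 => simp [tt]
    | 1 => simp [tt, Finset.sum_range_succ]
    | (k+2) =>
      rw [tt, ih k (by omega)]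
      conv_rhs => rw [Finset.sum_range_succ, Finset.sum_range_succ]
      rw [if_neg (by omega : ¬ (k + 2 - (k+1)) % 2 = 0), if_pos (by omega : (k + 2 - (k+2)) % 2 = 0)]
      have hs : (∑ z ∈ Finset.range (k+1), if (k + 2 - z) % 2 = 0 then M.choose z else 0)
          = ∑ z ∈ Finset.range (k+1), if (k - z) % 2 = 0 then M.choose z else 0 := by
        refine Finset.sum_congr rfl fun z hz => ?_
        simp only [Finset.mem_range] at hz
        have : (k + 2 - z) % 2 = (k - z) % 2 := by omega
        rw [this]
      rw [hs]
      omega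

private lemma tt_pascal (M : ℕ) : ∀ k, tt (M+1) (k+1) = tt M (k+1) + tt M k := by
  intro k
  induction k using Nat.strong_induction_on with
  | _ k ih =>
    match k with
    | 0 => simp [tt, Nat.choose_one_right]
    | 1 =>
      show tt (M+1) 2 = tt M 2 + tt M 1
      rw [tt, tt, tt]
      show 1 + (M+1).choose 2 = 1 + M.choose 2 + tt M 1
      rw [Nat.choose_succ_succ]
      show 1 + (M.choose 1 + M.choose 2) = 1 + M.choose 2 + M.choose 1
      ring
    | (k+2) =>
      show tt (M+1) (k+3) = tt M (k+3) + tt M (k+2)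
      have h1 : tt (M+1) (k+3) = tt (M+1) (k+1) + (M+1).choose (k+3) := by rw [tt]
      have h2 : tt M (k+3) = tt M (k+1) + M.choose (k+3) := by rw [tt]
      have h3 : tt M (k+2) = tt M k + M.choose (k+2) := by rw [tt]
      have h4 : (M+1).choose (k+3) = M.choose (k+2) + M.choose (k+3) := Nat.choose_succ_succ _ _
      have h5 := ih k (by omega)
      omega

private lemma tt_top (M : ℕ) : tt (M+1) (M+1) = 2^M ∧ tt (M+1) M = 2^M := by
  induction M with
  | zero => constructor <;> simp [tt]
  | succ M ih =>
    obtain ⟨h1, h2⟩ := ih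
    have p1 : tt (M+2) (M+2) = tt (M+1) (M+2) + tt (M+1) (M+1) := tt_pascal (M+1) (M+1)
    have p2 : tt (M+2) (M+1) = tt (M+1) (M+1) + tt (M+1) M := tt_pascal (M+1) M
    have goal1 : tt (M+1+1) (M+1+1) = tt (M+2) (M+2) := rfl
    have goal2 : tt (M+1+1) (M+1) = tt (M+2) (M+1) := rfl
    rw [goal1, goal2]
    have b : tt (M+1) (M+2) = tt (M+1) M + (M+1).choose (M+2) := by rw [tt]
    have c0 : (M+1).choose (M+2) = 0 := Nat.choose_eq_zero_of_lt (by omega)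
    have hp : 2^(M+1) = 2^M + 2^M := by rw [pow_succ]; ring
    omega

private lemma tt_ge (M : ℕ) : ∀ k, M ≤ k → tt (M+1) k = 2^M := by
  intro k
  induction k using Nat.strong_induction_on with
  | _ k ih =>
    intro hk
    rcases Nat.lt_or_ge k (M+2) with h | h
    · have : k = M ∨ k = M + 1 := by omega
      rcases this with h1 | h1 <;> rw [h1]
      · exact (tt_top M).2
      · exact (tt_top M).1
    · match k, h with
      | (j+2), _ =>
        have h1 : tt (M+1) (j+2) = tt (M+1) j + (M+1).choose (j+2) := by rw [tt]
        have c0 : (M+1).choose (j+2) = 0 := Nat.choose_eq_zero_of_lt (by omega)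
        have := ih j (by omega) (by omega)
        omega

private lemma tt_refl (N : ℕ) : ∀ w, w ≤ N → tt (N+2) w + tt (N+2) (N - w) = 2^(N+1) := by
  intro w
  induction w using Nat.strong_induction_on with
  | _ w ih =>
    intro hw
    have htop1 : tt (N+2) (N+2) = 2^(N+1) := (tt_top (N+1)).1
    have htop2 : tt (N+2) (N+1) = 2^(N+1) := (tt_top (N+1)).2
    match w with
    | 0 =>
      simp only [Nat.sub_zero]
      have b : tt (N+2) (N+2) = tt (N+2) N + (N+2).choose (N+2) := by rw [tt]
      have c : (N+2).choose (N+2) = 1 := Nat.choose_self _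
      have t0 : tt (N+2) 0 = 1 := rfl
      omega
    | 1 =>
      have hN : 1 ≤ N := hw
      have b : tt (N+2) (N+1) = tt (N+2) (N-1) + (N+2).choose (N+1) := by
        have e : N + 1 = (N - 1) + 2 := by omega
        rw [e, tt]
      have c : (N+2).choose (N+1) = N+2 := Nat.choose_succ_self_right (N+1)
      have t1 : tt (N+2) 1 = N+2 := by
        show (N+2).choose 1 = N+2
        simp [Nat.choose_one_right]
      omega
    | (w+2) =>
      have hw2 : w + 2 ≤ N := hw
      have b1 : tt (N+2) (w+2) = tt (N+2) w + (N+2).choose (w+2) := by rw [tt]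
      have b2 : tt (N+2) (N - w) = tt (N+2) (N - w - 2) + (N+2).choose (N - w) := by
        have e : N - w = (N - w - 2) + 2 := by omega
        rw [e, tt]
        have e2 : N - w - 2 + 2 = N - w := by omega
        rw [e2]
      have sym : (N+2).choose (w+2) = (N+2).choose (N - w) := by
        have h1 : w + 2 ≤ N + 2 := by omega
        have := Nat.choose_symm h1
        have e : N + 2 - (w + 2) = N - w := by omega
        rw [e] at this
        omega
      have e3 : N - (w + 2) = N - w - 2 := by omega
      have := ih w (by omega) (by omega)
      rw [e3]
      omega

private lemma tt_central (r : ℕ) : tt (2*r+2) r + tt (2*r+2) r = 2^(2*r+1) := by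
  have := tt_refl (2*r) r (by omega)
  have e : 2*r - r = r := by omega
  rw [e] at this
  exact this

private def TT (M : ℕ) (w : ℤ) : ℕ := if 0 ≤ w then tt M w.toNat else 0

private lemma Ib_eq (n : ℤ) (M : ℕ) : Ib n M = 2 * (TT M n : ℝ) / 2 ^ M := by
  unfold Ib TT
  by_cases h : 0 ≤ n
  · rw [if_pos h]
    have h1 : (n+1).toNat = n.toNat + 1 := by omega
    rw [h1, tt_sum]
    push_cast [apply_ite (Nat.cast : ℕ → ℝ)]
    rw [Finset.mul_sum, Finset.sum_div]
    refine Finset.sum_congr rfl fun z hz => ?_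
    by_cases hp : (n.toNat - z) % 2 = 0
    · rw [if_pos hp, Even.neg_one_pow (Nat.even_iff.mpr hp)]
      ring
    · rw [if_neg hp, Odd.neg_one_pow (Nat.odd_iff.mpr (by omega))]
      ring
  · rw [if_neg h]
    have h1 : (n+1).toNat = 0 := by omega
    rw [h1]
    simp

private lemma Ib_neg (n : ℤ) (M : ℕ) (h : n < 0) : Ib n M = 0 := by
  unfold Ib
  have h1 : (n+1).toNat = 0 := by omega
  rw [h1]
  simp

private lemma Ib_nonneg (n : ℤ) (M : ℕ) : 0 ≤ Ib n M := by
  rw [Ib_eq]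
  positivity

private lemma TT_pascal (M : ℕ) (w : ℤ) : TT (M+1) w = TT M w + TT M (w-1) := by
  unfold TT
  rcases lt_trichotomy w 0 with h | h | h
  · rw [if_neg (by omega), if_neg (by omega), if_neg (by omega)]
  · subst h
    rw [if_pos le_rfl, if_pos le_rfl, if_neg (by omega)]
    rfl
  · rw [if_pos (by omega), if_pos (by omega), if_pos (by omega)]
    have e1 : w.toNat = (w-1).toNat + 1 := by omega
    rw [e1, tt_pascal]

private lemma Ib_pascal (n : ℤ) (M : ℕ) : Ib n (M+1) * 2 = Ib n M + Ib (n-1) M := by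
  rw [Ib_eq, Ib_eq, Ib_eq, TT_pascal]
  push_cast
  rw [pow_succ]
  have h2 : (2:ℝ)^M ≠ 0 := by positivity
  field_simp

private noncomputable def S' (q : ℕ) (a : ℤ) (M : ℕ) (y : ℤ) (L : ℕ) : ℝ :=
  ∑ j ∈ Finset.range (q+1), (2 * Ib (a - (L:ℤ)*j) M - 2 * Ib (a - y - (L:ℤ)*j) M)

private lemma S'_neg (q : ℕ) (a : ℤ) (M : ℕ) (y : ℤ) (L : ℕ)
    (h1 : a < 0) (h2 : a - y < 0) : S' q a M y L = 0 := by
  unfold S'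
  refine Finset.sum_eq_zero fun j _ => ?_
  have hL : 0 ≤ (L:ℤ)*j := by positivity
  rw [Ib_neg _ _ (by omega), Ib_neg _ _ (by omega)]
  ring

private lemma S'_y0 (q : ℕ) (a : ℤ) (M L : ℕ) : S' q a M 0 L = 0 := by
  unfold S'
  refine Finset.sum_eq_zero fun j _ => ?_
  rw [sub_zero]
  ring

private lemma S'_succ (q : ℕ) (a : ℤ) (M : ℕ) (y : ℤ) (L : ℕ) :
    S' (q+1) a M y L = S' q a M y L
      + (2 * Ib (a - (L:ℤ)*(q+1:ℕ)) M - 2 * Ib (a - y - (L:ℤ)*(q+1:ℕ)) M) := by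
  unfold S'
  exact Finset.sum_range_succ _ _

private lemma S'_pascal (q : ℕ) (a : ℤ) (M : ℕ) (y : ℤ) (L : ℕ) :
    2 * S' q a (M+1) y L = S' q a M (y+1) L + S' q (a-1) M (y-1) L := by
  unfold S'
  rw [← Finset.sum_add_distrib, Finset.mul_sum]
  refine Finset.sum_congr rfl fun j _ => ?_
  have p1 := Ib_pascal (a - (L:ℤ)*j) M
  have p2 := Ib_pascal (a - y - (L:ℤ)*j) M
  rw [show a - (L:ℤ)*j - 1 = a - 1 - (L:ℤ)*j by ring] at p1
  rw [show a - y - (L:ℤ)*j - 1 = a - (y+1) - (L:ℤ)*j by ring] at p2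
  rw [show a - 1 - (y-1) - (L:ℤ)*j = a - y - (L:ℤ)*j by ring]
  linarith

private lemma S'_tel (q : ℕ) (a : ℤ) (M L : ℕ) :
    S' q a M (L:ℤ) L = 2 * Ib a M - 2 * Ib (a - (L:ℤ) * (q+1:ℕ)) M := by
  unfold S'
  have h : ∀ j ∈ Finset.range (q+1),
      (2 * Ib (a - (L:ℤ)*j) M - 2 * Ib (a - (L:ℤ) - (L:ℤ)*j) M)
        = (fun i : ℕ => 2 * Ib (a - (L:ℤ)*i) M) j
          - (fun i : ℕ => 2 * Ib (a - (L:ℤ)*i) M) (j+1) := by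
    intro j _
    simp only
    have e : a - (L:ℤ) - (L:ℤ)*(j:ℤ) = a - (L:ℤ)*((j:ℤ)+1) := by ring
    push_cast
    rw [e]
  rw [Finset.sum_congr rfl h, Finset.sum_range_sub']
  norm_num

-- new content below

private lemma Gfun_eq (x y m : ℕ) (h : ¬(x = 0 ∧ y = 0)) :
    Gfun x y m
      = S' (m / (2 * (x + y))) (((m : ℤ) - x) / 2)
          (2 * (((m : ℤ) - x) / 2) + x + 2).toNat (y : ℤ) (x + y)
      + S' (m / (2 * (x + y))) (((m : ℤ) - y) / 2)
          (2 * (((m : ℤ) - y) / 2) + y + 2).toNat (x : ℤ) (x + y) := by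
  simp only [Gfun, if_neg h, S', Nat.cast_add]
  rw [← Finset.sum_add_distrib]
  exact Finset.sum_congr rfl fun j _ => by ring

private lemma lt_div_helper (a b : ℕ) (hb : 0 < b) : a < b * (a / b + 1) := by
  have h1 := Nat.div_add_mod a b
  have h2 : a % b < b := Nat.mod_lt _ hb
  rw [Nat.mul_succ]
  set p := b * (a / b)
  omega

private lemma S'_full (m L : ℕ) (hL : 1 ≤ L) :
    S' (m / (2 * L)) ((m : ℤ) / 2) ((2 * ((m : ℤ) / 2) + 2).toNat) (L : ℤ) L = 1 := by
  have ha : (m : ℤ) / 2 = ((m / 2 : ℕ) : ℤ) := by omega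
  rw [ha]
  have hM : ((2 * ((m / 2 : ℕ) : ℤ) + 2)).toNat = 2 * (m / 2) + 2 := by omega
  rw [hM, S'_tel]
  have hq : m < 2 * L * (m / (2 * L) + 1) := lt_div_helper m (2 * L) (by omega)
  have hK : 2 * L * (m / (2 * L) + 1) = 2 * (L * (m / (2 * L) + 1)) := by ring
  rw [hK] at hq
  set K := L * (m / (2 * L) + 1) with hKdef
  have hrK : m / 2 < K := by omega
  have harg : ((m / 2 : ℕ) : ℤ) - (L : ℤ) * ((m / (2 * L) + 1 : ℕ) : ℤ) = ((m / 2 : ℕ) : ℤ) - (K : ℤ) := by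
    rw [hKdef]; push_cast; ring
  rw [harg, Ib_neg (((m / 2 : ℕ) : ℤ) - (K : ℤ)) (2 * (m / 2) + 2) (by omega),
    Ib_eq ((m / 2 : ℕ) : ℤ) (2 * (m / 2) + 2)]
  have hTT : TT (2 * (m / 2) + 2) ((m / 2 : ℕ) : ℤ) = tt (2 * (m / 2) + 2) (m / 2) := by
    unfold TT
    rw [if_pos (by positivity), Int.toNat_natCast]
  rw [hTT]
  have hc := tt_central (m / 2)
  have hpow : (2:ℕ) ^ (2 * (m / 2) + 2) = 2 ^ (2 * (m / 2) + 1) * 2 := pow_succ 2 _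
  have htt : 4 * tt (2 * (m / 2) + 2) (m / 2) = 2 ^ (2 * (m / 2) + 2) := by omega
  have httR : 4 * (tt (2 * (m / 2) + 2) (m / 2) : ℝ) = 2 ^ (2 * (m / 2) + 2) := by
    exact_mod_cast congrArg (Nat.cast : ℕ → ℝ) htt
  have hne : (2:ℝ) ^ (2 * (m / 2) + 2) ≠ 0 := by positivity
  field_simp
  linarith

private lemma Gfun_x0 (x m : ℕ) : Gfun x 0 m = 1 := by
  rcases Nat.eq_zero_or_pos x with rfl | hx
  · simp [Gfun]
  · rw [Gfun_eq x 0 m (by omega)]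
    simp only [Nat.cast_zero, sub_zero, add_zero, Nat.add_zero]
    rw [S'_y0, S'_full m x hx]
    ring

private lemma Gfun_0y (y m : ℕ) : Gfun 0 y m = 1 := by
  rcases Nat.eq_zero_or_pos y with rfl | hy
  · simp [Gfun]
  · rw [Gfun_eq 0 y m (by omega)]
    simp only [Nat.cast_zero, sub_zero, add_zero, Nat.zero_add]
    rw [S'_y0, S'_full m y hy]
    ring

private lemma Gfun_base (x y : ℕ) (hx : 1 ≤ x) (hy : 1 ≤ y) : Gfun x y 0 = 0 := by
  rw [Gfun_eq x y 0 (by omega)]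
  rw [S'_neg _ _ _ _ _ (by omega) (by omega), S'_neg _ _ _ _ _ (by omega) (by omega)]
  ring

private lemma key (m L x' : ℕ) (hL : 1 ≤ L) (A : ℤ) (y : ℤ) (hy : 0 ≤ y)
    (hAm : 2 * A ≤ (m : ℤ)) :
    2 * S' ((m+1) / (2*L)) A (2*A + (x':ℤ) + 2).toNat y L
      = S' (m / (2*L)) A (2*A + (x':ℤ) + 1).toNat (y+1) L
      + S' (m / (2*L)) (A-1) (2*A + (x':ℤ) + 1).toNat (y-1) L := by
  have hq2 : (m+1) / (2*L) = m / (2*L) ∨ (m+1) / (2*L) = m / (2*L) + 1 := by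
    have h1 : m / (2*L) ≤ (m+1) / (2*L) := Nat.div_le_div_right (by omega)
    have h2 : (m+1) / (2*L) ≤ m / (2*L) + 1 := by
      have h3 := Nat.add_div_right m (show 0 < 2*L by omega)
      have h4 : (m+1) / (2*L) ≤ (m + 2*L) / (2*L) := Nat.div_le_div_right (by omega)
      omega
    omega
  by_cases hA : A < 0
  · rw [S'_neg _ _ _ _ _ (by omega) (by omega),
      S'_neg _ _ _ _ _ (by omega) (by omega),
      S'_neg _ _ _ _ _ (by omega) (by omega)]
    ring
  · push_neg at hA
    have hM : (2*A + (x':ℤ) + 2).toNat = (2*A + (x':ℤ) + 1).toNat + 1 := by omega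
    rw [hM]
    rcases hq2 with h | h
    · rw [h]
      exact S'_pascal _ _ _ _ _
    · rw [h, S'_succ]
      -- show the extra top term vanishes
      have g1 : (m / (2*L) + 1) * (2*L) ≤ m+1 := by
        refine (Nat.le_div_iff_mul_le (by omega)).1 ?_
        omega
      have g2 : m < 2*L * (m / (2*L) + 1) := lt_div_helper m (2*L) (by omega)
      have e1 : 2*L * (m / (2*L) + 1) = 2 * (L * (m / (2*L) + 1)) := by ring
      have e2 : (m / (2*L) + 1) * (2*L) = 2 * (L * (m / (2*L) + 1)) := by ring
      rw [e1] at g2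
      rw [e2] at g1
      set K := L * (m / (2*L) + 1) with hKdef
      have harg : A - (L:ℤ) * ((m / (2*L) + 1 : ℕ) : ℤ) = A - (K:ℤ) := by
        rw [hKdef]; push_cast; ring
      have harg2 : A - y - (L:ℤ) * ((m / (2*L) + 1 : ℕ) : ℤ) = A - y - (K:ℤ) := by
        rw [hKdef]; push_cast; ring
      rw [harg, harg2, Ib_neg (A - (K:ℤ)) _ (by omega), Ib_neg (A - y - (K:ℤ)) _ (by omega)]
      have := S'_pascal (m / (2*L)) A ((2*A + (x':ℤ) + 1).toNat) y L
      linarith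

private lemma Grec (m x y : ℕ) (hx : 1 ≤ x) (hy : 1 ≤ y) :
    2 * Gfun x y (m+1) = Gfun (x-1) (y+1) m + Gfun (x+1) (y-1) m := by
  have hL1 : x - 1 + (y+1) = x + y := by omega
  have hL2 : x + 1 + (y-1) = x + y := by omega
  rw [Gfun_eq x y (m+1) (by omega), Gfun_eq (x-1) (y+1) m (by omega),
    Gfun_eq (x+1) (y-1) m (by omega), hL1, hL2]
  simp only [Nat.cast_add, Nat.cast_one, Nat.cast_sub hx, Nat.cast_sub hy]
  have e1 : ((m:ℤ) - ((x:ℤ) - 1)) / 2 = ((m:ℤ) + 1 - (x:ℤ)) / 2 := by omega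
  have e2 : ((m:ℤ) - ((x:ℤ) + 1)) / 2 = ((m:ℤ) + 1 - (x:ℤ)) / 2 - 1 := by omega
  have e3 : ((m:ℤ) - ((y:ℤ) + 1)) / 2 = ((m:ℤ) + 1 - (y:ℤ)) / 2 - 1 := by omega
  have e4 : ((m:ℤ) - ((y:ℤ) - 1)) / 2 = ((m:ℤ) + 1 - (y:ℤ)) / 2 := by omega
  rw [e1, e2, e3, e4]
  set A := ((m:ℤ) + 1 - (x:ℤ)) / 2 with hA
  set B := ((m:ℤ) + 1 - (y:ℤ)) / 2 with hB
  have f1 : 2 * A + ((x:ℤ) - 1) + 2 = 2 * A + (x:ℤ) + 1 := by ring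
  have f2 : 2 * (A - 1) + ((x:ℤ) + 1) + 2 = 2 * A + (x:ℤ) + 1 := by ring
  have f3 : 2 * (B - 1) + ((y:ℤ) + 1) + 2 = 2 * B + (y:ℤ) + 1 := by ring
  have f4 : 2 * B + ((y:ℤ) - 1) + 2 = 2 * B + (y:ℤ) + 1 := by ring
  rw [f1, f2, f3, f4]
  have hAm : 2 * A ≤ (m:ℤ) := by omega
  have hBm : 2 * B ≤ (m:ℤ) := by omega
  have H1 := key m (x+y) x (by omega) A (y:ℤ) (by positivity) hAm
  have H2 := key m (x+y) y (by omega) B (x:ℤ) (by positivity) hBm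
  linarith

private lemma Gnn : ∀ (m x y : ℕ), 0 ≤ Gfun x y m := by
  intro m
  induction m with
  | zero =>
    intro x y
    rcases Nat.eq_zero_or_pos x with rfl | hx
    · rw [Gfun_0y]; norm_num
    rcases Nat.eq_zero_or_pos y with rfl | hy
    · rw [Gfun_x0]; norm_num
    rw [Gfun_base x y hx hy]
  | succ m ih =>
    intro x y
    rcases Nat.eq_zero_or_pos x with rfl | hx
    · rw [Gfun_0y]; norm_num
    rcases Nat.eq_zero_or_pos y with rfl | hy
    · rw [Gfun_x0]; norm_num
    have h := Grec m x y hx hy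
    have h1 := ih (x-1) (y+1)
    have h2 := ih (x+1) (y-1)
    linarith

private lemma Gmono : ∀ (m x y : ℕ), Gfun x y m ≤ Gfun x y (m+1) := by
  intro m
  induction m with
  | zero =>
    intro x y
    rcases Nat.eq_zero_or_pos x with rfl | hx
    · rw [Gfun_0y, Gfun_0y]
    rcases Nat.eq_zero_or_pos y with rfl | hy
    · rw [Gfun_x0, Gfun_x0]
    rw [Gfun_base x y hx hy]
    exact Gnn 1 x y
  | succ m ih =>
    intro x y
    rcases Nat.eq_zero_or_pos x with rfl | hx
    · rw [Gfun_0y, Gfun_0y]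
    rcases Nat.eq_zero_or_pos y with rfl | hy
    · rw [Gfun_x0, Gfun_x0]
    have h1 := Grec m x y hx hy
    have h2 := Grec (m+1) x y hx hy
    have h3 := ih (x-1) (y+1)
    have h4 := ih (x+1) (y-1)
    linarith

private lemma Gconvex : ∀ (m x y : ℕ), 1 ≤ x → 1 ≤ y →
    2 * Gfun x y m ≤ Gfun (x-1) (y+1) m + Gfun (x+1) (y-1) m := by
  intro m
  induction m with
  | zero =>
    intro x y hx hy
    rw [Gfun_base x y hx hy]
    have h1 := Gnn 0 (x-1) (y+1)
    have h2 := Gnn 0 (x+1) (y-1)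
    linarith
  | succ m ih =>
    intro x y hx hy
    have h := Grec m x y hx hy
    rcases Nat.lt_or_ge x 2 with hx2 | hx2
    · -- x = 1
      have hx1 : x = 1 := by omega
      subst hx1
      simp only [Nat.sub_self] at h ⊢
      rw [Gfun_0y] at *
      have := Gmono m (1+1) (y-1)
      linarith
    rcases Nat.lt_or_ge y 2 with hy2 | hy2
    · -- y = 1
      have hy1 : y = 1 := by omega
      subst hy1
      simp only [Nat.sub_self] at h ⊢
      rw [Gfun_x0] at *
      have := Gmono m (x-1) (1+1)
      linarith
    · -- x ≥ 2, y ≥ 2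
      have hA := Grec m (x-1) (y+1) (by omega) (by omega)
      have hB := Grec m (x+1) (y-1) (by omega) (by omega)
      have eA1 : x - 1 - 1 = x - 2 := by omega
      have eA2 : y + 1 + 1 = y + 2 := by omega
      have eA3 : x - 1 + 1 = x := by omega
      have eA4 : y + 1 - 1 = y := by omega
      have eB1 : x + 1 - 1 = x := by omega
      have eB2 : y - 1 + 1 = y := by omega
      have eB3 : x + 1 + 1 = x + 2 := by omega
      have eB4 : y - 1 - 1 = y - 2 := by omega
      rw [eA1, eA2, eA3, eA4] at hA
      rw [eB1, eB2, eB3, eB4] at hB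
      have i1 := ih (x-1) (y+1) (by omega) (by omega)
      have i2 := ih (x+1) (y-1) (by omega) (by omega)
      rw [eA1, eA2, eA3, eA4] at i1
      rw [eB1, eB2, eB3, eB4] at i2
      linarith

theorem G_discrete_convex (n : ℕ) (hn : 2 ≤ n) (m : ℕ) (t : ℕ) (ht1 : 1 ≤ t) (ht2 : t ≤ n - 1) :
    2 * Gfun (n - t) t m ≤ Gfun (n - t - 1) (t + 1) m + Gfun (n - t + 1) (t - 1) m := by
  exact Gconvex m (n - t) t (by omega) ht1
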